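/- Let d1 = d2 ≥ 2, T = d1 + d2 − 1 ≥ 3, and c_s = T(T+1)/(d1·d2). Let A = UΛU* be a positive semidefinite real n×n matrix with eigenvalues 0 < λ_r ≤ … ≤ λ_1 ≤ 1 and orthonormal eigenvectors u_1,…,u_r, and let H_A = H(Q_T(A)). Then H_A is μ0-incoherent with μ0 ≤ max_{1≤i≤n} Σ_{ℓ=1}^r n·d2·(u_ℓ)_i² / (r·Σ_{s=0}^{d2−1} λ_ℓ^{2s}); that is, for every i, j ∈ [n] and t ∈ [T], ‖P_{T_{H_A}}(B_{i,j,t})‖_F² ≤ (c_s·r/(n·T)) · max_{1≤i'≤n} Σ_{ℓ=1}^r n·d2·(u_ℓ)_{i'}² / (r·Σ_{s=0}^{d2−1} λ_ℓ^{2s}). -/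

import Mathlib

/-!
The tangent projection splits orthogonally, giving `‖P_T(B)‖² ≤ ‖P B‖² + ‖B P‖²` with
`P = UH UHᵀ` an orthogonal projector. The Hankel basis matrix `B_{i,j,t}` has at most one nonzero
entry in each row and each column, all in rows `(p, i)` and columns `(q, j)`, so `‖P B‖²` is a
weighted average of the diagonal entries `P_{(p,i),(p,i)}`. These are leverage scores of the
normalised Vandermonde stack and, since `|λ_ℓ| ≤ 1`, are at most
`Σ_ℓ u_{iℓ}² / Σ_{s<d} λ_ℓ^{2s}`. Finally `c_s r/(nT) · nd/r = (T+1)/d = 2` when `T = 2d - 1`.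
-/

noncomputable section

open Matrix

/-- The block Hankel operator. -/
def blockHankel (n d1 d2 T : ℕ) (X : Fin T → Matrix (Fin n) (Fin n) ℝ) :
    Matrix (Fin d1 × Fin n) (Fin d2 × Fin n) ℝ :=
  Matrix.of fun p q =>
    if h : p.1.val + q.1.val < T then X ⟨p.1.val + q.1.val, h⟩ p.2 q.2 else 0

/-- `Q_T(A) = (A, A², …, A^T)`. -/
def QT (n T : ℕ) (A : Matrix (Fin n) (Fin n) ℝ) : Fin T → Matrix (Fin n) (Fin n) ℝ :=
  fun t => A ^ (t.val + 1)

/-- The Frobenius norm of a real matrix. -/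
def frobNorm {α β : Type*} [Fintype α] [Fintype β] (M : Matrix α β ℝ) : ℝ :=
  Real.sqrt (∑ i, ∑ j, (M i j) ^ 2)

/-- The standard basis tuple `E_{i,j,t}`. -/
def Etuple (n T : ℕ) (i j : Fin n) (t : Fin T) : Fin T → Matrix (Fin n) (Fin n) ℝ :=
  fun s => if s = t then Matrix.single i j 1 else 0

/-- The normalized block Hankel basis matrix `B_{i,j,t}`. -/
def Bmat (n d1 d2 T : ℕ) (i j : Fin n) (t : Fin T) :
    Matrix (Fin d1 × Fin n) (Fin d2 × Fin n) ℝ :=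
  (frobNorm (blockHankel n d1 d2 T (Etuple n T i j t)))⁻¹ •
    blockHankel n d1 d2 T (Etuple n T i j t)

/-- The orthogonal projection onto the tangent space. -/
def tanProj {α β : Type*} [Fintype α] [Fintype β] {r : ℕ}
    (U : Matrix α (Fin r) ℝ) (V : Matrix β (Fin r) ℝ) (M : Matrix α β ℝ) : Matrix α β ℝ :=
  U * Uᵀ * M + M * (V * Vᵀ) - U * Uᵀ * M * (V * Vᵀ)

/-- The generalized Vandermonde matrix `V_m(U,N)`, stacking `U N^0, …, U N^{m−1}`. -/
def vandStack (n r m : ℕ) (U : Matrix (Fin n) (Fin r) ℝ) (N : Matrix (Fin r) (Fin r) ℝ) :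
    Matrix (Fin m × Fin n) (Fin r) ℝ :=
  Matrix.of fun p l => (U * N ^ p.1.val) p.2 l

section Frobenius

variable {α β : Type*} [Fintype α] [Fintype β]

lemma sq_frobNorm (M : Matrix α β ℝ) : frobNorm M ^ 2 = ∑ i, ∑ j, M i j ^ 2 :=
  Real.sq_sqrt (by positivity)

lemma frobNorm_transpose (M : Matrix α β ℝ) : frobNorm Mᵀ = frobNorm M := by
  simp only [frobNorm, transpose_apply]
  rw [Finset.sum_comm]

lemma sq_frobNorm_eq_trace (M : Matrix α β ℝ) : frobNorm M ^ 2 = (Mᵀ * M).trace := by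
  rw [sq_frobNorm, Finset.sum_comm]
  simp only [Matrix.trace, diag_apply, Matrix.mul_apply, transpose_apply, sq]

lemma sq_frobNorm_inv_smul_self_le_one (M : Matrix α β ℝ) :
    frobNorm ((frobNorm M)⁻¹ • M) ^ 2 ≤ 1 := by
  have h : frobNorm ((frobNorm M)⁻¹ • M) ^ 2 = ((frobNorm M)⁻¹ * frobNorm M) ^ 2 := by
    simp only [sq_frobNorm, Matrix.smul_apply, smul_eq_mul, mul_pow, ← Finset.mul_sum]
  rw [h]
  rcases eq_or_ne (frobNorm M) 0 with h0 | h0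
  · simp [h0]
  · rw [inv_mul_cancel₀ h0, one_pow]

end Frobenius

section Projection

variable {α β : Type*} [Fintype α] {Q : Matrix α α ℝ}

lemma transpose_proj_mul_mul_proj_mul (hQ : Q * Q = Q) (hQt : Qᵀ = Q) (Y : Matrix α β ℝ) :
    (Q * Y)ᵀ * (Q * Y) = Yᵀ * (Q * Y) := by
  rw [transpose_mul, hQt, Matrix.mul_assoc, ← Matrix.mul_assoc Q Q Y, hQ]

variable [Fintype β]

lemma sq_frobNorm_proj_mul (hQ : Q * Q = Q) (hQt : Qᵀ = Q) (Y : Matrix α β ℝ) :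
    frobNorm (Q * Y) ^ 2 = (Yᵀ * (Q * Y)).trace := by
  rw [sq_frobNorm_eq_trace, transpose_proj_mul_mul_proj_mul hQ hQt]

lemma sq_frobNorm_eq_proj_mul_add (hQ : Q * Q = Q) (hQt : Qᵀ = Q) (Y : Matrix α β ℝ) :
    frobNorm Y ^ 2 = frobNorm (Q * Y) ^ 2 + frobNorm (Y - Q * Y) ^ 2 := by
  have hQ1 : (Q * Y)ᵀ * Y = (Yᵀ * (Q * Y))ᵀ := by
    simp only [transpose_mul, transpose_transpose, hQt, Matrix.mul_assoc]
  rw [sq_frobNorm_proj_mul hQ hQt, sq_frobNorm_eq_trace, sq_frobNorm_eq_trace, transpose_sub,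
    Matrix.sub_mul, Matrix.mul_sub, Matrix.mul_sub, transpose_proj_mul_mul_proj_mul hQ hQt, hQ1]
  simp only [trace_sub, trace_transpose]
  ring

lemma sq_frobNorm_tangent_le (hQ : Q * Q = Q) (hQt : Qᵀ = Q) (R : Matrix β β ℝ)
    (M : Matrix α β ℝ) :
    frobNorm (Q * M + M * R - Q * M * R) ^ 2 ≤ frobNorm (Q * M) ^ 2 + frobNorm (M * R) ^ 2 := by
  have hleft : Q * (Q * M + M * R - Q * M * R) = Q * M := by
    simp only [Matrix.mul_add, Matrix.mul_sub, ← Matrix.mul_assoc, hQ, add_sub_cancel_right]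
  have hright : Q * M + M * R - Q * M * R - Q * M = M * R - Q * (M * R) := by
    rw [Matrix.mul_assoc]; abel
  have hMR := sq_frobNorm_eq_proj_mul_add hQ hQt (M * R)
  rw [sq_frobNorm_eq_proj_mul_add hQ hQt, hleft, hright]
  linarith [sq_nonneg (frobNorm (Q * (M * R)))]

end Projection

section Orthonormal

variable {α β : Type*} [Fintype α] [Fintype β] {r : ℕ}

lemma mul_transpose_mul_self_of_orthonormal {W : Matrix α (Fin r) ℝ} (hW : Wᵀ * W = 1) :
    W * Wᵀ * (W * Wᵀ) = W * Wᵀ := by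
  rw [Matrix.mul_assoc, ← Matrix.mul_assoc Wᵀ, hW, Matrix.one_mul]

lemma sq_frobNorm_tanProj_le {U : Matrix α (Fin r) ℝ}
    (hU : Uᵀ * U = 1) (V : Matrix β (Fin r) ℝ) (M : Matrix α β ℝ) :
    frobNorm (tanProj U V M) ^ 2 ≤ frobNorm (U * Uᵀ * M) ^ 2 + frobNorm (M * (V * Vᵀ)) ^ 2 :=
  sq_frobNorm_tangent_le (mul_transpose_mul_self_of_orthonormal hU) (by simp [transpose_mul])
    (V * Vᵀ) M

end Orthonormal

section Support

variable {α β : Type*} [Fintype α] [Fintype β] {Q : Matrix α α ℝ} {R : Matrix β β ℝ}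
  {M : Matrix α β ℝ} {b : ℝ}

lemma sq_frobNorm_proj_mul_le (hQ : Q * Q = Q) (hQt : Qᵀ = Q)
    (hcol : ∀ k k' c, M k c ≠ 0 → M k' c ≠ 0 → k = k') (hdiag : ∀ k c, M k c ≠ 0 → Q k k ≤ b) :
    frobNorm (Q * M) ^ 2 ≤ b * frobNorm M ^ 2 := by
  have hterm : ∀ k c, M k c * (Q * M) k c ≤ b * M k c ^ 2 := by
    intro k c
    by_cases hkc : M k c = 0
    · simp [hkc]
    have hQM : (Q * M) k c = Q k k * M k c := by
      rw [Matrix.mul_apply]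
      refine Finset.sum_eq_single k (fun k' _ hk' => ?_) (by simp)
      by_cases hk'c : M k' c = 0
      · simp [hk'c]
      · exact absurd (hcol k' k c hk'c hkc) hk'
    rw [hQM, ← mul_assoc, mul_comm _ (Q k k), mul_assoc, ← sq]
    exact mul_le_mul_of_nonneg_right (hdiag k c hkc) (sq_nonneg _)
  rw [sq_frobNorm_proj_mul hQ hQt, sq_frobNorm, Finset.sum_comm, Finset.mul_sum, Matrix.trace]
  refine Finset.sum_le_sum fun c _ => ?_
  rw [diag_apply, Matrix.mul_apply, Finset.mul_sum]
  exact Finset.sum_le_sum fun k _ => hterm k c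

lemma sq_frobNorm_mul_proj_le (hR : R * R = R) (hRt : Rᵀ = R)
    (hrow : ∀ k c c', M k c ≠ 0 → M k c' ≠ 0 → c = c') (hdiag : ∀ k c, M k c ≠ 0 → R c c ≤ b) :
    frobNorm (M * R) ^ 2 ≤ b * frobNorm M ^ 2 := by
  rw [← frobNorm_transpose, ← frobNorm_transpose M, transpose_mul, hRt]
  exact sq_frobNorm_proj_mul_le hR hRt (fun c c' k => hrow k c c') (fun c k => hdiag k c)

end Support

section Hankel

variable {n d1 d2 T : ℕ} {i j : Fin n} {t : Fin T}

lemma blockHankel_Etuple_apply (p : Fin d1) (q : Fin d2) (a b : Fin n) :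
    blockHankel n d1 d2 T (Etuple n T i j t) (p, a) (q, b)
      = if a = i ∧ b = j ∧ p.val + q.val = t.val then 1 else 0 := by
  by_cases hpq : p.val + q.val = t.val
  · simp [blockHankel, Etuple, Fin.ext_iff, hpq, Matrix.single_apply, eq_comm]
  · simp [blockHankel, Etuple, Fin.ext_iff, hpq]

lemma Bmat_apply_ne_zero {p : Fin d1} {q : Fin d2} {a b : Fin n}
    (h : Bmat n d1 d2 T i j t (p, a) (q, b) ≠ 0) : a = i ∧ b = j ∧ p.val + q.val = t.val := by
  by_contra hne
  simp [Bmat, blockHankel_Etuple_apply, hne] at h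

lemma Bmat_col_support (k k' : Fin d1 × Fin n) (c : Fin d2 × Fin n)
    (hk : Bmat n d1 d2 T i j t k c ≠ 0) (hk' : Bmat n d1 d2 T i j t k' c ≠ 0) : k = k' := by
  obtain ⟨ha, -, hs⟩ := Bmat_apply_ne_zero hk
  obtain ⟨ha', -, hs'⟩ := Bmat_apply_ne_zero hk'
  exact Prod.ext (Fin.ext (by omega)) (ha.trans ha'.symm)

lemma Bmat_row_support (k : Fin d1 × Fin n) (c c' : Fin d2 × Fin n)
    (hc : Bmat n d1 d2 T i j t k c ≠ 0) (hc' : Bmat n d1 d2 T i j t k c' ≠ 0) : c = c' := by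
  obtain ⟨-, hb, hs⟩ := Bmat_apply_ne_zero hc
  obtain ⟨-, hb', hs'⟩ := Bmat_apply_ne_zero hc'
  exact Prod.ext (Fin.ext (by omega)) (hb.trans hb'.symm)

lemma sq_frobNorm_Bmat_le_one : frobNorm (Bmat n d1 d2 T i j t) ^ 2 ≤ 1 :=
  sq_frobNorm_inv_smul_self_le_one _

lemma sq_frobNorm_tanProj_Bmat_le {r : ℕ} {W : Matrix (Fin d1 × Fin n) (Fin r) ℝ}
    {V : Matrix (Fin d2 × Fin n) (Fin r) ℝ} {a b : ℝ} (hW : Wᵀ * W = 1) (hV : Vᵀ * V = 1)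
    (hWdiag : ∀ p, (W * Wᵀ) (p, i) (p, i) ≤ a) (hVdiag : ∀ q, (V * Vᵀ) (q, j) (q, j) ≤ b)
    (ha : 0 ≤ a) (hb : 0 ≤ b) :
    frobNorm (tanProj W V (Bmat n d1 d2 T i j t)) ^ 2 ≤ a + b := by
  have hleft : frobNorm (W * Wᵀ * Bmat n d1 d2 T i j t) ^ 2 ≤ a :=
    (sq_frobNorm_proj_mul_le (mul_transpose_mul_self_of_orthonormal hW)
      (by simp [transpose_mul]) Bmat_col_support
      fun ⟨p, _⟩ _ h => (Bmat_apply_ne_zero h).1 ▸ hWdiag p).trans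
      (mul_le_of_le_one_right ha sq_frobNorm_Bmat_le_one)
  have hright : frobNorm (Bmat n d1 d2 T i j t * (V * Vᵀ)) ^ 2 ≤ b :=
    (sq_frobNorm_mul_proj_le (mul_transpose_mul_self_of_orthonormal hV)
      (by simp [transpose_mul]) Bmat_row_support
      fun _ ⟨q, _⟩ h => (Bmat_apply_ne_zero h).2.1 ▸ hVdiag q).trans
      (mul_le_of_le_one_right hb sq_frobNorm_Bmat_le_one)
  linarith [sq_frobNorm_tanProj_le hW V (Bmat n d1 d2 T i j t)]

end Hankel

section Vandermonde

variable {n r m : ℕ} {U : Matrix (Fin n) (Fin r) ℝ} {lam : Fin r → ℝ}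

def normVandStack (n r m : ℕ) (U : Matrix (Fin n) (Fin r) ℝ) (lam : Fin r → ℝ) :
    Matrix (Fin m × Fin n) (Fin r) ℝ :=
  vandStack n r m U (diagonal lam) *
    diagonal fun l => (Real.sqrt (∑ s ∈ Finset.range m, lam l ^ (2 * s)))⁻¹

lemma normVandStack_apply (p : Fin m) (a : Fin n) (l : Fin r) :
    normVandStack n r m U lam (p, a) l
      = U a l * lam l ^ p.val * (Real.sqrt (∑ s ∈ Finset.range m, lam l ^ (2 * s)))⁻¹ := by
  simp [normVandStack, vandStack, diagonal_pow, mul_diagonal]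

lemma sum_range_pow_two_mul_nonneg (x : ℝ) : 0 ≤ ∑ s ∈ Finset.range m, x ^ (2 * s) :=
  Finset.sum_nonneg fun s _ => by rw [pow_mul]; positivity

lemma sum_range_pow_two_mul_pos (hm : 0 < m) (x : ℝ) : 0 < ∑ s ∈ Finset.range m, x ^ (2 * s) :=
  Finset.sum_pos' (fun s _ => by rw [pow_mul]; positivity)
    ⟨0, Finset.mem_range.mpr hm, by simp⟩

lemma transpose_normVandStack_mul_self (hm : 0 < m) (hU : Uᵀ * U = 1) :
    (normVandStack n r m U lam)ᵀ * normVandStack n r m U lam = 1 := by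
  ext k l
  have hUkl : ∑ a, U a k * U a l = (1 : Matrix (Fin r) (Fin r) ℝ) k l := by
    rw [← hU, Matrix.mul_apply]; rfl
  set g : Fin r → ℝ := fun l => (Real.sqrt (∑ s ∈ Finset.range m, lam l ^ (2 * s)))⁻¹
  have hfactor : ∀ p : Fin m, ∑ a, U a k * lam k ^ p.val * g k * (U a l * lam l ^ p.val * g l)
      = lam k ^ p.val * lam l ^ p.val * (g k * g l) * ∑ a, U a k * U a l := fun p => by
    rw [Finset.mul_sum]; exact Finset.sum_congr rfl fun a _ => by ring
  simp only [Matrix.mul_apply, transpose_apply, normVandStack_apply, Fintype.sum_prod_type]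
  rw [Finset.sum_congr rfl fun p _ => hfactor p, hUkl]
  rcases eq_or_ne k l with rfl | hkl
  · have hS := sum_range_pow_two_mul_pos hm (lam k)
    have hgg : g k * g k = (∑ s ∈ Finset.range m, lam k ^ (2 * s))⁻¹ := by
      rw [← mul_inv, Real.mul_self_sqrt hS.le]
    simp only [one_apply_eq, mul_one, hgg, ← Finset.sum_mul]
    rw [Fin.sum_univ_eq_sum_range (fun s => lam k ^ s * lam k ^ s)]
    simp only [← pow_add, ← two_mul]
    exact mul_inv_cancel₀ hS.ne'
  · simp [hkl]

lemma normVandStack_mul_transpose_apply_self_le (hlam : ∀ l, |lam l| ≤ 1) (p : Fin m)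
    (a : Fin n) :
    (normVandStack n r m U lam * (normVandStack n r m U lam)ᵀ) (p, a) (p, a)
      ≤ ∑ l, U a l ^ 2 / ∑ s ∈ Finset.range m, lam l ^ (2 * s) := by
  simp only [Matrix.mul_apply, transpose_apply, normVandStack_apply]
  refine Finset.sum_le_sum fun l _ => ?_
  have hsqrt : (Real.sqrt (∑ s ∈ Finset.range m, lam l ^ (2 * s)))⁻¹ ^ 2
      = (∑ s ∈ Finset.range m, lam l ^ (2 * s))⁻¹ := by
    rw [inv_pow, Real.sq_sqrt (sum_range_pow_two_mul_nonneg _)]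
  have hpow : (lam l ^ p.val) ^ 2 ≤ 1 := by
    rw [sq_le_one_iff_abs_le_one, abs_pow]
    exact pow_le_one₀ (abs_nonneg _) (hlam l)
  calc U a l * lam l ^ p.val * (Real.sqrt (∑ s ∈ Finset.range m, lam l ^ (2 * s)))⁻¹
        * (U a l * lam l ^ p.val * (Real.sqrt (∑ s ∈ Finset.range m, lam l ^ (2 * s)))⁻¹)
      = U a l ^ 2 * (lam l ^ p.val) ^ 2 / ∑ s ∈ Finset.range m, lam l ^ (2 * s) := by
        rw [div_eq_mul_inv, ← hsqrt]; ring
    _ ≤ U a l ^ 2 * 1 / ∑ s ∈ Finset.range m, lam l ^ (2 * s) := by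
        gcongr; exact sum_range_pow_two_mul_nonneg _
    _ = U a l ^ 2 / ∑ s ∈ Finset.range m, lam l ^ (2 * s) := by rw [mul_one]

end Vandermonde

lemma hankel_incoherence_scale_mul_sum {n d T r : ℕ} (hT : T = d + d - 1) (hn : n ≠ 0)
    (hd : d ≠ 0) (x S : Fin r → ℝ) :
    ((T : ℝ) * ((T : ℝ) + 1) / ((d : ℝ) * (d : ℝ))) * (r : ℝ) / ((n : ℝ) * (T : ℝ))
      * ∑ l, (n : ℝ) * (d : ℝ) * x l / ((r : ℝ) * S l) = 2 * ∑ l, x l / S l := by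
  have hTd : (T : ℝ) + 1 = 2 * d := by
    rw [hT, Nat.cast_sub (by omega)]; push_cast; ring
  have hT0 : (T : ℝ) ≠ 0 := by rw [Nat.cast_ne_zero]; omega
  rw [Finset.mul_sum, Finset.mul_sum]
  refine Finset.sum_congr rfl fun l _ => ?_
  have hr : (r : ℝ) ≠ 0 := Nat.cast_ne_zero.mpr l.pos.ne'
  rw [hTd]
  field_simp

theorem psd_incoherence_bound_general (n d T r : ℕ)
    (hT : T = d + d - 1)
    (lam : Fin r → ℝ) (hlam : ∀ l, 0 < lam l) (hlam1 : ∀ l, lam l ≤ 1)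
    (U : Matrix (Fin n) (Fin r) ℝ) (hU : Uᵀ * U = 1)
    (i j : Fin n) (t : Fin T) :
    letI UH : Matrix (Fin d × Fin n) (Fin r) ℝ :=
      vandStack n r d U (Matrix.diagonal lam) *
        Matrix.diagonal fun l => (Real.sqrt (∑ s ∈ Finset.range d, lam l ^ (2 * s)))⁻¹
    frobNorm (tanProj UH UH (Bmat n d d T i j t)) ^ 2
      ≤ ((T : ℝ) * ((T : ℝ) + 1) / ((d : ℝ) * (d : ℝ))) * (r : ℝ) / ((n : ℝ) * (T : ℝ))
        * (⨆ i' : Fin n, ∑ l, (n : ℝ) * (d : ℝ) * (U i' l) ^ 2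
            / ((r : ℝ) * ∑ s ∈ Finset.range d, lam l ^ (2 * s))) := by
  show frobNorm (tanProj (normVandStack n r d U lam) (normVandStack n r d U lam) _) ^ 2 ≤ _
  have hd : 0 < d := by have := t.isLt; omega
  have hUH := transpose_normVandStack_mul_self (lam := lam) hd hU
  set lev : Fin n → ℝ := fun a => ∑ l, U a l ^ 2 / ∑ s ∈ Finset.range d, lam l ^ (2 * s)
  have hdiag : ∀ p a, (normVandStack n r d U lam * (normVandStack n r d U lam)ᵀ) (p, a) (p, a)
      ≤ lev a :=
    normVandStack_mul_transpose_apply_self_le fun l => abs_le.mpr ⟨by linarith [hlam l], hlam1 l⟩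
  have hlev : ∀ a, 0 ≤ lev a := fun a =>
    Finset.sum_nonneg fun l _ => div_nonneg (sq_nonneg _) (sum_range_pow_two_mul_nonneg _)
  have hbdd : BddAbove (Set.range lev) := (Set.finite_range lev).bddAbove
  calc _ ≤ lev i + lev j :=
        sq_frobNorm_tanProj_Bmat_le hUH hUH (hdiag · i) (hdiag · j) (hlev i) (hlev j)
    _ ≤ 2 * ⨆ a, lev a := by
        linarith [le_ciSup hbdd i, le_ciSup hbdd j]
    _ = _ := by
        rw [Real.mul_iSup_of_nonneg zero_le_two, Real.mul_iSup_of_nonneg (by positivity)]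
        exact iSup_congr fun a =>
          (hankel_incoherence_scale_mul_sum hT i.pos.ne' hd.ne' (fun l => U a l ^ 2) _).symm

/-- For `d1 = d2 = d ≥ 2`, `T = 2d − 1 ≥ 3` and a positive semidefinite `A = UΛU*` with
eigenvalues `0 < λ_r ≤ … ≤ λ_1 ≤ 1`, the block Hankel matrix `H_A = H(Q_T(A))` is
`μ0`-incoherent with `μ0 ≤ max_i Σ_ℓ n d (u_ℓ)_i²/(r Σ_{s<d} λ_ℓ^{2s})`: for every `(i,j,t)`,
`‖P_{T_{H_A}}(B_{i,j,t})‖_F² ≤ (c_s r/(nT)) · max_{i'} Σ_ℓ n d (u_ℓ)_{i'}²/(r Σ_{s<d} λ_ℓ^{2s})`. -/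
theorem psd_incoherence_bound (n d T r : ℕ) (hn : 1 ≤ n) (hr : 1 ≤ r) (hd : 2 ≤ d)
    (hT : T = d + d - 1)
    (lam : Fin r → ℝ) (hlam : ∀ l, 0 < lam l) (hlam1 : ∀ l, lam l ≤ 1)
    (hmono : ∀ k l : Fin r, k ≤ l → lam l ≤ lam k)
    (U : Matrix (Fin n) (Fin r) ℝ) (hU : Uᵀ * U = 1)
    (A : Matrix (Fin n) (Fin n) ℝ) (hA : A = U * Matrix.diagonal lam * Uᵀ)
    (i j : Fin n) (t : Fin T) :
    letI UH : Matrix (Fin d × Fin n) (Fin r) ℝ :=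
      vandStack n r d U (Matrix.diagonal lam) *
        Matrix.diagonal fun l => (Real.sqrt (∑ s ∈ Finset.range d, lam l ^ (2 * s)))⁻¹
    frobNorm (tanProj UH UH (Bmat n d d T i j t)) ^ 2
      ≤ ((T : ℝ) * ((T : ℝ) + 1) / ((d : ℝ) * (d : ℝ))) * (r : ℝ) / ((n : ℝ) * (T : ℝ))
        * (⨆ i' : Fin n, ∑ l, (n : ℝ) * (d : ℝ) * (U i' l) ^ 2
            / ((r : ℝ) * ∑ s ∈ Finset.range d, lam l ^ (2 * s))) :=
  psd_incoherence_bound_general n d T r hT lam hlam hlam1 U hU i j t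

end
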